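/- arXiv:nlin/0506016 — 4 statements merged into one kernel-verified Lean document; each statement's English description precedes it below -/
import Mathlib

section
/- Let n ≥ 1, let A₀, A₁ ∈ Mₙ(ℂ), let σ ∈ ℂ with σ ≠ 0, and let λ₊, λ₋ ∈ ℂ with λ₊ ≠ λ₋. Suppose the matrix pencil D(λ) := A₀ + λA₁ satisfies D(λ)² = σ(λ−λ₊)(λ−λ₋)·I for all λ ∈ ℂ. Then A₁² = σ·I (in particular A₁ is invertible), and the matrix P := (σ(λ₊−λ₋))⁻¹·(A₁A₀ + σλ₊·I) satisfies P² = P, A₁ P A₁⁻¹ = I − P, and D(λ) = A₁·((λ−λ₊)·I + (λ₊−λ₋)·P) for all λ ∈ ℂ. -/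
open Matrix

/-- If the pencil `D(λ) = A₀ + λ•A₁` satisfies
`D(λ)² = σ(λ−λ₊)(λ−λ₋)·I` for all `λ`, then `A₁² = σ·I` (so `A₁` is invertible),
`P := (σ(λ₊−λ₋))⁻¹·(A₁A₀ + σλ₊·I)` is idempotent, `A₁ P A₁⁻¹ = I − P`, and
`D(λ) = A₁·((λ−λ₊)·I + (λ₊−λ₋)·P)` for all `λ`. -/
theorem stmt0 {n : ℕ} (hn : 1 ≤ n) (A₀ A₁ : Matrix (Fin n) (Fin n) ℂ)
    (σ : ℂ) (hσ : σ ≠ 0) (lp lm : ℂ) (hl : lp ≠ lm)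
    (hD : ∀ z : ℂ, (A₀ + z • A₁) ^ 2
      = (σ * (z - lp) * (z - lm)) • (1 : Matrix (Fin n) (Fin n) ℂ)) :
    A₁ ^ 2 = σ • (1 : Matrix (Fin n) (Fin n) ℂ) ∧ IsUnit A₁ ∧
    ((σ * (lp - lm))⁻¹ • (A₁ * A₀ + (σ * lp) • (1 : Matrix (Fin n) (Fin n) ℂ))) ^ 2
      = (σ * (lp - lm))⁻¹ • (A₁ * A₀ + (σ * lp) • (1 : Matrix (Fin n) (Fin n) ℂ)) ∧
    A₁ * ((σ * (lp - lm))⁻¹ • (A₁ * A₀ + (σ * lp) • (1 : Matrix (Fin n) (Fin n) ℂ))) * A₁⁻¹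
      = 1 - (σ * (lp - lm))⁻¹ • (A₁ * A₀ + (σ * lp) • (1 : Matrix (Fin n) (Fin n) ℂ)) ∧
    ∀ z : ℂ, A₀ + z • A₁
      = A₁ * ((z - lp) • (1 : Matrix (Fin n) (Fin n) ℂ)
          + (lp - lm) • ((σ * (lp - lm))⁻¹ • (A₁ * A₀ + (σ * lp) • (1 : Matrix (Fin n) (Fin n) ℂ)))) := by
  have hlm : lp - lm ≠ 0 := sub_ne_zero.2 hl
  have hexp : ∀ z : ℂ, (A₀ + z • A₁) ^ 2
      = A₀*A₀ + z • (A₀*A₁ + A₁*A₀) + (z*z) • (A₁*A₁) := by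
    intro z
    simp only [pow_two, mul_add, add_mul, smul_mul_assoc, mul_smul_comm, smul_smul, smul_add]
    module
  have h0 := (hexp 0).symm.trans (hD 0)
  have h1 := (hexp 1).symm.trans (hD 1)
  have h2 := (hexp (-1)).symm.trans (hD (-1))
  have hX : A₀*A₀ = (σ*(lp*lm)) • (1 : Matrix (Fin n) (Fin n) ℂ) := by
    linear_combination (norm := module) h0
  have hZ : A₁*A₁ = σ • (1 : Matrix (Fin n) (Fin n) ℂ) := by
    linear_combination (norm := module) (2:ℂ)⁻¹ • h1 + (2:ℂ)⁻¹ • h2 - h0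
  have hY : A₀*A₁ + A₁*A₀ = (-(σ*(lp+lm))) • (1 : Matrix (Fin n) (Fin n) ℂ) := by
    linear_combination (norm := module) (2:ℂ)⁻¹ • h1 - (2:ℂ)⁻¹ • h2
  have hA0A1 : A₀*A₁ = (-(σ*(lp+lm))) • (1 : Matrix (Fin n) (Fin n) ℂ) - A₁*A₀ :=
    eq_sub_of_add_eq hY
  have hZ' : A₁ ^ 2 = σ • (1 : Matrix (Fin n) (Fin n) ℂ) := by rw [pow_two]; exact hZ
  have hmul : A₁ * (σ⁻¹ • A₁) = 1 := by
    rw [mul_smul_comm, hZ, smul_smul, inv_mul_cancel₀ hσ, one_smul]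
  have hmul' : (σ⁻¹ • A₁) * A₁ = 1 := by
    rw [smul_mul_assoc, hZ, smul_smul, inv_mul_cancel₀ hσ, one_smul]
  have hu : IsUnit A₁ := ⟨⟨A₁, σ⁻¹ • A₁, hmul, hmul'⟩, rfl⟩
  have hinv : A₁⁻¹ = σ⁻¹ • A₁ := inv_eq_right_inv hmul
  have hA1A1A0 : A₁*(A₁*A₀) = σ • A₀ := by
    rw [← mul_assoc, hZ, smul_mul_assoc, one_mul]
  refine ⟨hZ', hu, ?_, ?_, ?_⟩
  · -- idempotent
    have key : A₁*A₀*(A₁*A₀) = (-(σ*(lp+lm)))•(A₁*A₀)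
        - (σ*(σ*(lp*lm))) • (1 : Matrix (Fin n) (Fin n) ℂ) := by
      calc A₁*A₀*(A₁*A₀) = A₁*(A₀*A₁)*A₀ := by noncomm_ring
        _ = A₁*((-(σ*(lp+lm))) • (1 : Matrix (Fin n) (Fin n) ℂ) - A₁*A₀)*A₀ := by rw [hA0A1]
        _ = (-(σ*(lp+lm)))•(A₁*A₀) - (A₁*A₁)*(A₀*A₀) := by
            simp only [mul_sub, sub_mul, mul_smul_comm, smul_mul_assoc, mul_one, one_mul]
            noncomm_ring
        _ = _ := by rw [hZ, hX]; simp only [smul_mul_assoc, one_mul, smul_smul]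
    have hMM : (A₁*A₀ + (σ*lp) • (1 : Matrix (Fin n) (Fin n) ℂ))
        * (A₁*A₀ + (σ*lp) • (1 : Matrix (Fin n) (Fin n) ℂ))
        = (σ*(lp-lm)) • (A₁*A₀ + (σ*lp) • (1 : Matrix (Fin n) (Fin n) ℂ)) := by
      calc _ = A₁*A₀*(A₁*A₀) + (2*(σ*lp))•(A₁*A₀)
            + ((σ*lp)*(σ*lp)) • (1 : Matrix (Fin n) (Fin n) ℂ) := by
            simp only [mul_add, add_mul, smul_mul_assoc, mul_smul_comm, smul_smul, mul_one, one_mul]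
            module
        _ = _ := by rw [key]; module
    rw [pow_two, smul_mul_assoc, mul_smul_comm, smul_smul, hMM, smul_smul]
    match_scalars <;> field_simp <;> ring
  · -- A₁ P A₁⁻¹ = 1 - P
    rw [hinv, mul_smul_comm, mul_smul_comm, smul_mul_assoc, smul_smul]
    have hAMA : A₁ * (A₁*A₀ + (σ*lp) • (1 : Matrix (Fin n) (Fin n) ℂ)) * A₁
        = (-(σ*(σ*lm))) • (1 : Matrix (Fin n) (Fin n) ℂ) - σ•(A₁*A₀) := by
      rw [mul_add, hA1A1A0, mul_smul_comm, mul_one, add_mul, smul_mul_assoc,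
        smul_mul_assoc, hA0A1, hZ]
      module
    rw [hAMA]
    match_scalars <;> field_simp <;> ring
  · intro z
    have hAM : A₁ * (A₁*A₀ + (σ*lp) • (1 : Matrix (Fin n) (Fin n) ℂ))
        = σ • A₀ + (σ*lp) • A₁ := by
      rw [mul_add, hA1A1A0, mul_smul_comm, mul_one]
    calc A₀ + z • A₁
        = (z - lp) • A₁ + (lp - lm) • ((σ*(lp-lm))⁻¹ • (σ • A₀ + (σ*lp) • A₁)) := by
          match_scalars <;> field_simp <;> ring
      _ = _ := by
          rw [mul_add, mul_smul_comm, mul_one, mul_smul_comm, mul_smul_comm, hAM]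
end

section
/- Let n ≥ 1, let A₀, A₁ ∈ Mₙ(ℂ), let σ ∈ ℂ with σ ≠ 0, and let λ₊, λ₋ ∈ ℂ with λ₊ ≠ λ₋. If the matrix pencil D(λ) := A₀ + λA₁ satisfies D(λ)² = σ(λ−λ₊)(λ−λ₋)·I for all λ ∈ ℂ, then n is even. -/
open Matrix

/-!
Put `M = D(λ₊)` and `N = D(λ₋)`. Both square to zero, and polarizing the identity at the midpoint
`(λ₊ + λ₋)/2` gives `MN + NM = μ·I` with `μ = -σ(λ₊ - λ₋)² ≠ 0`. Then `P = μ⁻¹·NM` is idempotent,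
since `(NM)² = N(μ - NM)M = μ·NM`, and `2·tr P = μ⁻¹·tr(MN + NM) = n`. The trace of an idempotent
is its rank, so `n = 2·rank P`.
-/

section Pencil

variable {K A : Type*} [Field K] [NeZero (2 : K)] [Ring A] [Algebra K A]

theorem pencil_anticomm_eq (A₀ A₁ : A) (a b : K) :
    (A₀ + a • A₁) * (A₀ + b • A₁) + (A₀ + b • A₁) * (A₀ + a • A₁)
      = (4 : K) • (A₀ + ((a + b) / 2) • A₁) ^ 2 - (A₀ + a • A₁) ^ 2 - (A₀ + b • A₁) ^ 2 := by
  have hmid : A₀ + ((a + b) / 2) • A₁ = (2⁻¹ : K) • ((A₀ + a • A₁) + (A₀ + b • A₁)) := by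
    match_scalars <;> field_simp
    norm_num
  have hfour : (4 : K) * (2⁻¹) ^ 2 = 1 := by field_simp; norm_num
  rw [hmid, smul_pow, smul_smul, hfour, one_smul]
  generalize A₀ + a • A₁ = x
  generalize A₀ + b • A₁ = y
  noncomm_ring

end Pencil

section SquareZero

variable {K A : Type*} [Field K] [Ring A] [Algebra K A]

theorem isIdempotentElem_inv_smul_mul_of_anticomm {M N : A} (hM : M * M = 0) (hN : N * N = 0)
    {μ : K} (hμ : μ ≠ 0) (hMN : M * N + N * M = μ • 1) : IsIdempotentElem (μ⁻¹ • (N * M)) := by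
  have hsq : N * M * (N * M) = μ • (N * M) :=
    calc N * M * (N * M) = N * (M * N + N * M) * M - N * N * (M * M) := by noncomm_ring
      _ = μ • (N * M) := by rw [hMN, hM, hN]; simp
  rw [IsIdempotentElem, smul_mul_smul, hsq, smul_smul, inv_mul_cancel_right₀ hμ]

end SquareZero

namespace Matrix

variable {K ι : Type*} [Field K] [Fintype ι] [DecidableEq ι]

theorem trace_eq_rank_of_isIdempotentElem {P : Matrix ι ι K} (hP : IsIdempotentElem P) :
    P.trace = P.rank := by
  rw [← trace_toLin'_eq]
  exact (LinearMap.IsIdempotentElem.isProj_range _ (hP.map toLinAlgEquiv')).trace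

theorem even_card_of_sq_eq_zero_of_anticomm [CharZero K] {M N : Matrix ι ι K} (hM : M * M = 0)
    (hN : N * N = 0) {μ : K} (hμ : μ ≠ 0) (hMN : M * N + N * M = μ • 1) :
    Even (Fintype.card ι) := by
  set P := μ⁻¹ • (N * M)
  have htrace : 2 * P.trace = Fintype.card ι := by
    have := congrArg trace hMN
    rw [trace_add, trace_mul_comm M N, ← two_mul, trace_smul, trace_one, smul_eq_mul] at this
    rw [trace_smul, smul_eq_mul, mul_left_comm, this, inv_mul_cancel_left₀ hμ]
  rw [trace_eq_rank_of_isIdempotentElem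
    (isIdempotentElem_inv_smul_mul_of_anticomm hM hN hμ hMN)] at htrace
  exact ⟨P.rank, by exact_mod_cast htrace.symm.trans (two_mul _)⟩

end Matrix

theorem stmt1_general {n : ℕ} (A₀ A₁ : Matrix (Fin n) (Fin n) ℂ)
    (σ : ℂ) (hσ : σ ≠ 0) (lp lm : ℂ) (hl : lp ≠ lm)
    (hD : ∀ z : ℂ, (A₀ + z • A₁) ^ 2
      = (σ * (z - lp) * (z - lm)) • (1 : Matrix (Fin n) (Fin n) ℂ)) :
    Even n := by
  have hsq (z : ℂ) (hz : z = lp ∨ z = lm) : (A₀ + z • A₁) * (A₀ + z • A₁) = 0 := by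
    rcases hz with rfl | rfl <;> simp [← sq, hD]
  have hμ : -σ * (lp - lm) ^ 2 ≠ 0 := by
    simpa [sub_eq_zero] using And.intro hσ hl
  have hanticomm : (A₀ + lp • A₁) * (A₀ + lm • A₁) + (A₀ + lm • A₁) * (A₀ + lp • A₁)
      = (-σ * (lp - lm) ^ 2) • (1 : Matrix (Fin n) (Fin n) ℂ) := by
    rw [pencil_anticomm_eq, hD, hD, hD, smul_smul, ← sub_smul, ← sub_smul]
    congr 1
    ring
  simpa using even_card_of_sq_eq_zero_of_anticomm (hsq lp (.inl rfl)) (hsq lm (.inr rfl)) hμ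
    hanticomm

/-- If the pencil `D(λ) = A₀ + λ•A₁` satisfies
`D(λ)² = σ(λ−λ₊)(λ−λ₋)·I` for all `λ` (with `σ ≠ 0`, `λ₊ ≠ λ₋`), then `n` is even. -/
theorem stmt1 {n : ℕ} (hn : 1 ≤ n) (A₀ A₁ : Matrix (Fin n) (Fin n) ℂ)
    (σ : ℂ) (hσ : σ ≠ 0) (lp lm : ℂ) (hl : lp ≠ lm)
    (hD : ∀ z : ℂ, (A₀ + z • A₁) ^ 2
      = (σ * (z - lp) * (z - lm)) • (1 : Matrix (Fin n) (Fin n) ℂ)) :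
    Even n :=
  stmt1_general A₀ A₁ σ hσ lp lm hl hD
end

section
/- Let d ≥ 1, let n = 2d, let σ ∈ ℂ with σ ≠ 0, and let P ∈ Mₙ(ℂ) be an idempotent matrix (P² = P) whose rank equals d. Then there exists an invertible matrix N ∈ Mₙ(ℂ) with N² = σ·I and N P N⁻¹ = I − P. -/
/-!
An idempotent `P` is the projection onto `range P` along `ker P`. When the two have the same
dimension, pick an isomorphism `φ : range P ≃ ker P`; the involution `G` acting as `φ` on
`range P` and as `φ⁻¹` on `ker P` exchanges the two summands, hence `G P = (1 - P) G`.
Then `N = s G` with `s² = σ` works.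
-/

open Matrix LinearMap Module

namespace IsIdempotentElem

variable {R E : Type*} [Ring R] [AddCommGroup E] [Module R E] {f : Module.End R E}

noncomputable def swapRangeKer (hf : IsIdempotentElem f) (φ : range f ≃ₗ[R] ker f) :
    Module.End R E :=
  ofIsCompl hf.isCompl ((ker f).subtype ∘ₗ φ.toLinearMap) ((range f).subtype ∘ₗ φ.symm.toLinearMap)

variable (hf : IsIdempotentElem f) (φ : range f ≃ₗ[R] ker f)

@[simp]
theorem swapRangeKer_apply_range (x : range f) : hf.swapRangeKer φ x = φ x := by
  simp [swapRangeKer]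

@[simp]
theorem swapRangeKer_apply_ker (y : ker f) : hf.swapRangeKer φ y = φ.symm y := by
  simp [swapRangeKer]

theorem swapRangeKer_mul_self : hf.swapRangeKer φ * hf.swapRangeKer φ = 1 := by
  refine ext_on_codisjoint hf.isCompl.codisjoint (fun x hx ↦ ?_) (fun y hy ↦ ?_)
  · lift x to range f using hx
    simp
  · lift y to ker f using hy
    simp

theorem swapRangeKer_mul : hf.swapRangeKer φ * f = (1 - f) * hf.swapRangeKer φ := by
  refine ext_on_codisjoint hf.isCompl.codisjoint (fun x hx ↦ ?_) (fun y hy ↦ ?_)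
  · lift x to range f using hx
    simp [hf.mem_range_iff.mp x.2]
  · lift y to ker f using hy
    simp [hf.mem_range_iff.mp (φ.symm y).2]

end IsIdempotentElem

theorem Matrix.exists_mul_self_eq_one_and_mul_eq_one_sub_mul {K n : Type*} [Field K] [Fintype n]
    [DecidableEq n] {P : Matrix n n K} (hP : IsIdempotentElem P)
    (hrank : 2 * P.rank = Fintype.card n) :
    ∃ G : Matrix n n K, G * G = 1 ∧ G * P = (1 - P) * G := by
  set e := toLinAlgEquiv' (R := K) (n := n)
  have hf : IsIdempotentElem (e P) := hP.map e
  have hker : finrank K (range (e P)) = finrank K (ker (e P)) := by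
    have := (e P).finrank_range_add_finrank_ker
    change P.rank + _ = _ at this
    rw [finrank_fintype_fun_eq_card] at this
    change P.rank = _
    omega
  set g := hf.swapRangeKer (.ofFinrankEq _ _ hker)
  refine ⟨e.symm g, e.injective ?_, e.injective ?_⟩
  · simp only [map_mul, map_one, e.apply_symm_apply, g, hf.swapRangeKer_mul_self]
  · simp only [map_mul, map_sub, map_one, e.apply_symm_apply, g, hf.swapRangeKer_mul]

theorem isUnit_of_sq_eq_smul_one {K A : Type*} [Field K] [Ring A] [Algebra K A] {a : A} {σ : K}
    (hσ : σ ≠ 0) (ha : a ^ 2 = σ • 1) : IsUnit a :=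
  ⟨⟨a, σ⁻¹ • a, by rw [mul_smul_comm, ← sq, ha, smul_smul, inv_mul_cancel₀ hσ, one_smul],
    by rw [smul_mul_assoc, ← sq, ha, smul_smul, inv_mul_cancel₀ hσ, one_smul]⟩, rfl⟩

theorem stmt8_general {d : ℕ} (σ : ℂ) (hσ : σ ≠ 0)
    (P : Matrix (Fin (2 * d)) (Fin (2 * d)) ℂ)
    (hP : P ^ 2 = P) (hrank : P.rank = d) :
    ∃ N : Matrix (Fin (2 * d)) (Fin (2 * d)) ℂ,
      IsUnit N ∧ N ^ 2 = σ • (1 : Matrix (Fin (2 * d)) (Fin (2 * d)) ℂ) ∧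
      N * P * N⁻¹ = 1 - P := by
  obtain ⟨s, hs⟩ := IsAlgClosed.exists_pow_nat_eq σ two_pos
  obtain ⟨G, hG2, hGP⟩ := exists_mul_self_eq_one_and_mul_eq_one_sub_mul (P := P)
    (by rw [IsIdempotentElem, ← sq, hP]) (by rw [hrank, Fintype.card_fin])
  have hN2 : (s • G) ^ 2 = σ • 1 := by rw [smul_pow, sq G, hG2, hs]
  have hN : IsUnit (s • G) := isUnit_of_sq_eq_smul_one hσ hN2
  refine ⟨s • G, hN, hN2, ?_⟩
  rw [smul_mul_assoc, hGP, ← mul_smul_comm,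
    mul_nonsing_inv_cancel_right _ _ ((Matrix.isUnit_iff_isUnit_det _).mp hN)]

/-- For every idempotent `P ∈ M_{2d}(ℂ)` of rank `d` and every `σ ≠ 0`
there exists an invertible `N` with `N² = σ·I` and `N P N⁻¹ = I − P`. -/
theorem stmt8 {d : ℕ} (hd : 1 ≤ d) (σ : ℂ) (hσ : σ ≠ 0)
    (P : Matrix (Fin (2 * d)) (Fin (2 * d)) ℂ)
    (hP : P ^ 2 = P) (hrank : P.rank = d) :
    ∃ N : Matrix (Fin (2 * d)) (Fin (2 * d)) ℂ,
      IsUnit N ∧ N ^ 2 = σ • (1 : Matrix (Fin (2 * d)) (Fin (2 * d)) ℂ) ∧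
      N * P * N⁻¹ = 1 - P :=
  stmt8_general σ hσ P hP hrank
end

section
/- Let n ≥ 1, let A₀, A₁ ∈ Mₙ(ℂ), let σ ∈ ℂ with σ ≠ 0, and let λ₊, λ₋ ∈ ℂ with λ₊ ≠ λ₋. Suppose the pencil D(λ) := A₀ + λA₁ satisfies D(λ)² = σ(λ−λ₊)(λ−λ₋)·I for all λ ∈ ℂ, and that there exist real numbers α, β, γ such that (A₀ + conj(λ)·A₁)† · (A₀ + λ·A₁) = (αλ² + βλ + γ)·I for all λ ∈ ℂ. Then λ₋ = conj(λ₊), and λ₊ is not real. -/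
open Matrix

open Polynomial in
/-- If the pencil `D(λ) = A₀ + λ•A₁` satisfies `D(λ)² = σ(λ−λ₊)(λ−λ₋)·I`
and the unitary reduction `D(conj λ)†·D(λ) = (αλ² + βλ + γ)·I` with real `α, β, γ`,
then `λ₋ = conj λ₊` and `λ₊` is not real. -/
theorem stmt12 {n : ℕ} (hn : 1 ≤ n) (A₀ A₁ : Matrix (Fin n) (Fin n) ℂ)
    (σ : ℂ) (hσ : σ ≠ 0) (lp lm : ℂ) (hl : lp ≠ lm)
    (hD : ∀ z : ℂ, (A₀ + z • A₁) ^ 2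
      = (σ * (z - lp) * (z - lm)) • (1 : Matrix (Fin n) (Fin n) ℂ))
    (α β γ : ℝ)
    (hred : ∀ z : ℂ, (A₀ + (starRingEnd ℂ z) • A₁)ᴴ * (A₀ + z • A₁)
      = ((α : ℂ) * z ^ 2 + (β : ℂ) * z + (γ : ℂ)) • (1 : Matrix (Fin n) (Fin n) ℂ)) :
    lm = starRingEnd ℂ lp ∧ lp.im ≠ 0 := by
  -- Step 1: the scalar identity `s(z)² t(z) = p(z)² s(z)` for all `z`.
  have key : ∀ z : ℂ,
      (σ*(z-lp)*(z-lm))^2 * ((starRingEnd ℂ σ)*(z - starRingEnd ℂ lp)*(z - starRingEnd ℂ lm))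
        = ((α:ℂ)*z^2+(β:ℂ)*z+(γ:ℂ))^2 * (σ*(z-lp)*(z-lm)) := by
    intro z
    set s : ℂ := σ*(z-lp)*(z-lm) with hs
    set t : ℂ := (starRingEnd ℂ σ)*(z - starRingEnd ℂ lp)*(z - starRingEnd ℂ lm) with ht
    set p : ℂ := (α:ℂ)*z^2+(β:ℂ)*z+(γ:ℂ) with hp
    set Dz := A₀ + z • A₁ with hDz
    set Ez := (A₀ + (starRingEnd ℂ z) • A₁)ᴴ with hEz
    have h1 : Ez * Dz = p • 1 := hred z
    have h2 : Dz ^ 2 = s • 1 := hD z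
    have h3 : Ez ^ 2 = t • 1 := by
      have h4 : Ez ^ 2 = ((A₀ + (starRingEnd ℂ z) • A₁) ^ 2)ᴴ := by
        simp [hEz, pow_two, conjTranspose_mul]
      rw [h4, hD (starRingEnd ℂ z)]
      rw [conjTranspose_smul, conjTranspose_one]
      congr 1
      simp [ht, star_mul', star_sub, Complex.star_def]
    have h5 : s • Ez = p • Dz := by
      calc s • Ez = Ez * (s • 1) := by rw [Matrix.mul_smul, mul_one]
        _ = Ez * Dz ^ 2 := by rw [h2]
        _ = (Ez * Dz) * Dz := by rw [pow_two, mul_assoc]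
        _ = (p • 1) * Dz := by rw [h1]
        _ = p • Dz := by rw [Matrix.smul_mul, one_mul]
    have h6 : (s^2 * t) • (1 : Matrix (Fin n) (Fin n) ℂ) = (p^2 * s) • 1 := by
      have h7 : (s • Ez)^2 = (p • Dz)^2 := by rw [h5]
      rw [_root_.smul_pow, _root_.smul_pow, h2, h3, smul_smul, smul_smul] at h7
      exact h7
    have := congrFun (congrFun h6 ⟨0, hn⟩) ⟨0, hn⟩
    simpa using this
  -- Step 2: cancel one factor `s(z)` via polynomials: `s(z) t(z) = p(z)²` for all `z`.
  have keyE : ∀ z : ℂ,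
      (σ*(z-lp)*(z-lm)) * ((starRingEnd ℂ σ)*(z - starRingEnd ℂ lp)*(z - starRingEnd ℂ lm))
        = ((α:ℂ)*z^2+(β:ℂ)*z+(γ:ℂ))^2 := by
    set S : ℂ[X] := C σ * (X - C lp) * (X - C lm) with hS
    set T : ℂ[X] := C (starRingEnd ℂ σ) * (X - C (starRingEnd ℂ lp)) * (X - C (starRingEnd ℂ lm))
      with hT
    set P : ℂ[X] := C (α:ℂ) * X^2 + C (β:ℂ) * X + C (γ:ℂ) with hP
    have h : S^2 * T = P^2 * S := by
      apply Polynomial.funext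
      intro z
      simp only [hS, hT, hP, eval_mul, eval_add, eval_sub, eval_pow, eval_C, eval_X]
      exact key z
    have hS0 : S ≠ 0 :=
      mul_ne_zero (mul_ne_zero (by simpa using hσ) (X_sub_C_ne_zero lp)) (X_sub_C_ne_zero lm)
    have hST : S * T = P * P := by
      apply mul_left_cancel₀ hS0
      linear_combination h
    intro z
    have := congrArg (eval z) hST
    simp only [hS, hT, hP, eval_mul, eval_add, eval_sub, eval_pow, eval_C, eval_X] at this
    linear_combination this
  -- Step 3: `lp` and `lm` are roots of `p`, hence `β = -α(lp+lm)`, `γ = α lp lm`.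
  have hplp : (α:ℂ)*lp^2+(β:ℂ)*lp+(γ:ℂ) = 0 := by
    have h := keyE lp
    have h0 : ((α:ℂ)*lp^2+(β:ℂ)*lp+(γ:ℂ))^2 = 0 := by rw [← h]; ring
    exact pow_eq_zero_iff (by norm_num) |>.mp h0
  have hplm : (α:ℂ)*lm^2+(β:ℂ)*lm+(γ:ℂ) = 0 := by
    have h := keyE lm
    have h0 : ((α:ℂ)*lm^2+(β:ℂ)*lm+(γ:ℂ))^2 = 0 := by rw [← h]; ring
    exact pow_eq_zero_iff (by norm_num) |>.mp h0
  have hd : lp - lm ≠ 0 := sub_ne_zero.mpr hl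
  have hβ : (β:ℂ) = -(α:ℂ)*(lp+lm) := by
    have h1 : (lp - lm) * ((α:ℂ)*(lp+lm)+(β:ℂ)) = 0 := by linear_combination hplp - hplm
    have h2 := (mul_eq_zero.mp h1).resolve_left hd
    linear_combination h2
  have hγ : (γ:ℂ) = (α:ℂ)*lp*lm := by linear_combination hplp - lp * hβ
  -- Step 4: cancel `(z-lp)(z-lm)` from `s t = p²`.
  have hUV : ∀ z : ℂ, σ * starRingEnd ℂ σ * (z - starRingEnd ℂ lp) * (z - starRingEnd ℂ lm)
      = (α:ℂ)^2 * ((z-lp)*(z-lm)) := by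
    have hU0 : C (σ * starRingEnd ℂ σ) * ((X - C (starRingEnd ℂ lp)) * (X - C (starRingEnd ℂ lm)))
        - C ((α:ℂ)^2) * ((X - C lp) * (X - C lm)) = 0 := by
      apply eq_zero_of_infinite_isRoot
      have hcompl : (({lp, lm} : Set ℂ)ᶜ).Infinite :=
        Set.Finite.infinite_compl (Set.Finite.insert lp (Set.finite_singleton lm))
      refine hcompl.mono ?_
      intro z hz
      simp only [Set.mem_compl_iff, Set.mem_insert_iff, Set.mem_singleton_iff, not_or] at hz
      obtain ⟨hz1, hz2⟩ := hz
      have h1 := keyE z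
      have hpfac : (α:ℂ)*z^2+(β:ℂ)*z+(γ:ℂ) = (α:ℂ)*((z-lp)*(z-lm)) := by
        linear_combination z * hβ + hγ
      have h2 : ((z-lp)*(z-lm)) *
            (σ * starRingEnd ℂ σ * (z - starRingEnd ℂ lp) * (z - starRingEnd ℂ lm))
          = ((z-lp)*(z-lm)) * ((α:ℂ)^2*((z-lp)*(z-lm))) := by
        linear_combination h1 + ((α:ℂ)*((z-lp)*(z-lm)) + ((α:ℂ)*z^2+(β:ℂ)*z+(γ:ℂ))) * hpfac
      have h3 := mul_left_cancel₀ (mul_ne_zero (sub_ne_zero.mpr hz1) (sub_ne_zero.mpr hz2)) h2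
      show IsRoot _ z
      simp only [IsRoot, eval_sub, eval_mul, eval_add, eval_pow, eval_C, eval_X]
      linear_combination h3
    intro z
    have := congrArg (eval z) hU0
    simp only [eval_sub, eval_mul, eval_C, eval_X, eval_zero] at this
    linear_combination this
  -- Step 5: positivity of `p` on the real axis.
  have hpos : ∀ x : ℝ, 0 ≤ α*x^2 + β*x + γ := by
    intro x
    have h := hred (x:ℂ)
    rw [Complex.conj_ofReal] at h
    have h2 := congrFun (congrFun h ⟨0,hn⟩) ⟨0,hn⟩
    rw [Matrix.mul_apply] at h2
    have hRhs : (((α:ℂ) * (x:ℂ)^2 + (β:ℂ)*(x:ℂ) + (γ:ℂ)) • (1 : Matrix (Fin n) (Fin n) ℂ))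
        ⟨0,hn⟩ ⟨0,hn⟩ = ((α*x^2+β*x+γ : ℝ) : ℂ) := by
      simp [Matrix.smul_apply]
    rw [hRhs] at h2
    have hRe := congrArg Complex.re h2
    rw [Complex.ofReal_re] at hRe
    rw [← hRe, Complex.re_sum]
    apply Finset.sum_nonneg
    intro k _
    have : ((A₀ + (x:ℂ) • A₁)ᴴ ⟨0,hn⟩ k) * ((A₀ + (x:ℂ) • A₁) k ⟨0,hn⟩)
        = ((Complex.normSq ((A₀ + (x:ℂ) • A₁) k ⟨0,hn⟩) : ℝ) : ℂ) := by
      rw [Matrix.conjTranspose_apply]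
      exact Complex.normSq_eq_conj_mul_self.symm
    rw [this, Complex.ofReal_re]
    exact Complex.normSq_nonneg _
  -- Step 6: endgame.
  have hσσ : σ * starRingEnd ℂ σ ≠ 0 := mul_ne_zero hσ (star_ne_zero.mpr hσ)
  have h1 : σ * starRingEnd ℂ σ * (lp - starRingEnd ℂ lp) * (lp - starRingEnd ℂ lm) = 0 := by
    rw [hUV lp]; ring
  rcases mul_eq_zero.mp h1 with h2 | h2
  · rcases mul_eq_zero.mp h2 with h3 | h3
    · exact absurd h3 hσσ
    · -- `lp` is real: derive a contradiction from positivity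
      exfalso
      have hlp : starRingEnd ℂ lp = lp := by linear_combination -h3
      have h4 : σ * starRingEnd ℂ σ * (lm - starRingEnd ℂ lp) * (lm - starRingEnd ℂ lm) = 0 := by
        rw [hUV lm]; ring
      have h5 : lm - starRingEnd ℂ lp ≠ 0 := by rw [hlp]; exact sub_ne_zero.mpr (Ne.symm hl)
      have hlm : starRingEnd ℂ lm = lm := by
        rcases mul_eq_zero.mp h4 with h6 | h6
        · exact absurd ((mul_eq_zero.mp h6).resolve_left hσσ) h5
        · linear_combination -h6
      have him : (lp + Complex.I - lm) ≠ 0 := by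
        intro h
        have := congrArg Complex.im h
        simp [Complex.add_im, Complex.sub_im, Complex.I_im,
          Complex.conj_eq_iff_im.mp hlp, Complex.conj_eq_iff_im.mp hlm] at this
      have hα2 : σ * starRingEnd ℂ σ = (α:ℂ)^2 := by
        have h7 := hUV (lp + Complex.I)
        rw [hlp, hlm] at h7
        have h8 : (σ * starRingEnd ℂ σ) * (Complex.I * (lp + Complex.I - lm))
            = ((α:ℂ)^2) * (Complex.I * (lp + Complex.I - lm)) := by linear_combination h7
        exact mul_right_cancel₀ (mul_ne_zero Complex.I_ne_zero him) h8
      set a := lp.re with ha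
      set b := lm.re with hb
      have hlpa : (a:ℂ) = lp := Complex.conj_eq_iff_re.mp hlp
      have hlmb : (b:ℂ) = lm := Complex.conj_eq_iff_re.mp hlm
      have hab : a ≠ b := by
        intro h; apply hl; rw [← hlpa, ← hlmb, h]
      have hβr : β = -α*(a+b) := by
        have : ((β:ℝ):ℂ) = ((-α*(a+b):ℝ):ℂ) := by
          push_cast
          linear_combination hβ + (α:ℂ)*hlpa + (α:ℂ)*hlmb
        exact_mod_cast this
      have hγr : γ = α*a*b := by
        have : ((γ:ℝ):ℂ) = ((α*a*b:ℝ):ℂ) := by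
          push_cast
          linear_combination hγ - (α:ℂ)*lm*hlpa - (α:ℂ)*(a:ℂ)*hlmb
        exact_mod_cast this
      have hpos' : ∀ x : ℝ, 0 ≤ α*(x-a)*(x-b) := by
        intro x
        have h := hpos x
        have : α*(x-a)*(x-b) = α*x^2 + β*x + γ := by rw [hβr, hγr]; ring
        linarith [h, this.ge, this.le]
      have habs1 := le_abs_self (b - a)
      have habs2 := abs_nonneg (b - a)
      have hsq : 0 < (a-b)^2 := by
        have : a - b ≠ 0 := sub_ne_zero.mpr hab
        positivity
      have hα0 : α = 0 := by
        have hm := hpos' ((a+b)/2)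
        have hp2 := hpos' (a + 1 + |b - a|)
        have hf1 : (0:ℝ) < 1 + |b-a| := by positivity
        have hf2 : (0:ℝ) < 1 + |b-a| + a - b := by linarith
        have hle : α ≤ 0 := by
          by_contra hx
          push_neg at hx
          nlinarith [hm, hsq]
        have hge : 0 ≤ α := by
          by_contra hx
          push_neg at hx
          nlinarith [hp2, mul_pos hf1 hf2]
        linarith
      apply hσσ
      rw [hα2, hα0]
      norm_num
  · -- `lp = conj lm`, i.e. `lm = conj lp`.
    have hlm : lm = starRingEnd ℂ lp := by
      have : starRingEnd ℂ lp = starRingEnd ℂ (starRingEnd ℂ lm) := by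
        rw [← sub_eq_zero.mp h2]
      rwa [Complex.conj_conj, eq_comm] at this
    refine ⟨hlm, fun him => ?_⟩
    apply hl
    rw [hlm, Complex.conj_eq_iff_im.mpr him]
end
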